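/- For every integer k and every real x, the following identity of formal power series in ℝ[[t]] holds: exp(x·L(t)) · Lif_{k,p,q}(−L(t)) = Σ_{n≥0} Ĉ_{n,p,q}^{(k)}(x) · t^n/n!, where L(t) = Σ_{n≥1} (−1)^{n−1} t^n/n is the formal logarithm log(1+t), so the left-hand side is (1+t)^x·Lif_{k,p,q}(−log(1+t)). -/

import Mathlib

open Finset

/-- The `(p,q)`-integer `[m]_{p,q} = (p^m - q^m)/(p - q)`. -/
noncomputable def pqInt (p q : ℝ) (m : ℕ) : ℝ := (p ^ m - q ^ m) / (p - q)

/-- The exponential generating function `∑ f n * t^n / n!` of a sequence `f`. -/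
noncomputable def egf (f : ℕ → ℝ) : PowerSeries ℝ :=
  PowerSeries.mk fun n => f n / n.factorial

/-- The unsigned Stirling numbers of the first kind, defined by the recurrence
`S1(n+1, m+1) = n * S1(n, m+1) + S1(n, m)`, so that
`x(x+1)⋯(x+n-1) = ∑_{m=0}^{n} S1(n,m) x^m`. -/
def stirling1 : ℕ → ℕ → ℕ
  | 0, 0 => 1
  | 0, _ + 1 => 0
  | _ + 1, 0 => 0
  | n + 1, m + 1 => n * stirling1 n (m + 1) + stirling1 n m

/-- The `(p,q)`-poly-Cauchy polynomials of the first kind. -/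
noncomputable def pqCauchy1 (p q : ℝ) (k : ℤ) (x : ℝ) (n : ℕ) : ℝ :=
  ∑ m ∈ Finset.range (n + 1),
    (-1 : ℝ) ^ (n - m) * (stirling1 n m : ℝ) *
      ∑ l ∈ Finset.range (m + 1),
        (m.choose l : ℝ) * (-x) ^ l / pqInt p q (m - l + 1) ^ k

/-- The `(p,q)`-poly-Cauchy polynomials of the second kind. -/
noncomputable def pqCauchy2 (p q : ℝ) (k : ℤ) (x : ℝ) (n : ℕ) : ℝ :=
  (-1 : ℝ) ^ n *
    ∑ m ∈ Finset.range (n + 1),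
      (stirling1 n m : ℝ) *
        ∑ l ∈ Finset.range (m + 1),
          (m.choose l : ℝ) * (-x) ^ l / pqInt p q (m - l + 1) ^ k

/-- Formal substitution of a power series `S` with zero constant term into the
`k`-th `(p,q)`-polylogarithm factorial function
`Lif_{k,p,q}(s) = ∑_{m ≥ 0} s^m / (m! [m+1]_{p,q}^k)`.
(For `m > n` the series `S^m` has zero `n`-th coefficient, so the sum is finite.) -/
noncomputable def pqLif (p q : ℝ) (k : ℤ) (S : PowerSeries ℝ) : PowerSeries ℝ :=
  PowerSeries.mk fun n =>
    ∑ m ∈ Finset.range (n + 1),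
      PowerSeries.coeff (R := ℝ) n (S ^ m) / ((m.factorial : ℝ) * pqInt p q (m + 1) ^ k)

/-- Formal substitution of a power series `S` with zero constant term into the
exponential series `exp(s) = ∑_{m ≥ 0} s^m / m!`. -/
noncomputable def expComp (S : PowerSeries ℝ) : PowerSeries ℝ :=
  PowerSeries.mk fun n =>
    ∑ m ∈ Finset.range (n + 1), PowerSeries.coeff (R := ℝ) n (S ^ m) / (m.factorial : ℝ)

/-- The formal logarithm `log(1 + t) = ∑_{n ≥ 1} (-1)^(n-1) t^n / n`. -/
noncomputable def logOnePlus : PowerSeries ℝ :=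
  PowerSeries.mk fun n => if n = 0 then 0 else (-1 : ℝ) ^ (n - 1) / n

/-!
Both factors are substitutions of `log(1+t)` into exponential generating functions:
`exp(x s) = ∑ x^m s^m/m!` and `Lif_{k,p,q}(-s) = ∑ (-1)^m s^m/(m! [m+1]^k)`. Substitution is a ring
homomorphism, so the product is the substitution into the binomial convolution of these two egfs.
Substituting `log(1+t)` into an egf `∑ c_m s^m/m!` gives the egf of `∑_m (-1)^(n+m) S_1(n,m) c_m`,
because `n! [t^n] log(1+t)^m = (-1)^(n+m) m! S_1(n,m)`; this follows by comparing coefficients in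
`(1+t) (log(1+t)^(m+1))' = (m+1) log(1+t)^m`, which reproduces the Stirling recurrence.
-/

open PowerSeries

section Substitution

variable {R : Type*} [CommRing R]

theorem PowerSeries.coeff_pow_eq_zero_of_lt {S : R⟦X⟧} (hS : constantCoeff S = 0) {n m : ℕ}
    (h : n < m) : coeff n (S ^ m) = 0 :=
  coeff_of_lt_order _ <| (Nat.cast_lt.mpr h).trans_le (le_order_pow_of_constantCoeff_eq_zero m hS)

theorem PowerSeries.coeff_subst_eq_sum_range {S : R⟦X⟧} (hS : constantCoeff S = 0) (f : R⟦X⟧)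
    (n : ℕ) : coeff n (f.subst S) = ∑ m ∈ range (n + 1), coeff m f * coeff n (S ^ m) := by
  rw [coeff_subst' (HasSubst.of_constantCoeff_zero' hS)]
  refine finsum_eq_sum_of_support_subset _ fun m hm => ?_
  by_contra hmn
  simp only [coe_range, Set.mem_Iio, not_lt] at hmn
  exact hm (by simp [coeff_pow_eq_zero_of_lt hS (show n < m by omega)])

end Substitution

theorem egf_mul (u v : ℕ → ℝ) :
    egf u * egf v = egf fun m => ∑ l ∈ range (m + 1), (m.choose l : ℝ) * u l * v (m - l) := by
  ext m
  simp only [egf, coeff_mul, coeff_mk, Nat.sum_antidiagonal_eq_sum_range_succ_mk, sum_div]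
  refine sum_congr rfl fun l hl => ?_
  have hfac : (m.choose l : ℝ) * l.factorial * (m - l).factorial = m.factorial := by
    exact_mod_cast Nat.choose_mul_factorial_mul_factorial (mem_range_succ_iff.mp hl)
  rw [← hfac]
  have hchoose : (m.choose l : ℝ) ≠ 0 := by
    exact_mod_cast (Nat.choose_pos (mem_range_succ_iff.mp hl)).ne'
  field_simp

theorem expComp_smul (a : ℝ) {S : ℝ⟦X⟧} (hS : constantCoeff S = 0) :
    expComp (a • S) = (egf (a ^ ·)).subst S := by
  ext n
  rw [coeff_subst_eq_sum_range hS, expComp, coeff_mk]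
  refine sum_congr rfl fun m _ => ?_
  rw [smul_pow, map_smul, egf, coeff_mk, smul_eq_mul]
  ring

theorem pqLif_smul (p q : ℝ) (k : ℤ) (a : ℝ) {S : ℝ⟦X⟧} (hS : constantCoeff S = 0) :
    pqLif p q k (a • S) = (egf fun m => a ^ m / pqInt p q (m + 1) ^ k).subst S := by
  ext n
  rw [coeff_subst_eq_sum_range hS, pqLif, coeff_mk]
  refine sum_congr rfl fun m _ => ?_
  rw [smul_pow, map_smul, egf, coeff_mk, smul_eq_mul]
  ring

theorem constantCoeff_logOnePlus : constantCoeff logOnePlus = 0 := by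
  simp [logOnePlus, ← coeff_zero_eq_constantCoeff_apply]

theorem derivative_logOnePlus : d⁄dX ℝ logOnePlus = mk fun n => (-1) ^ n := by
  ext n
  rw [coeff_derivative, logOnePlus, coeff_mk, coeff_mk, if_neg n.succ_ne_zero, Nat.add_sub_cancel]
  push_cast
  field_simp

theorem one_add_X_mul_derivative_logOnePlus : (1 + X) * d⁄dX ℝ logOnePlus = 1 := by
  ext n
  rw [derivative_logOnePlus, add_mul, one_mul, map_add, coeff_mk, coeff_one]
  rcases n with _ | n
  · simp
  · simp [coeff_succ_X_mul, pow_succ]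

theorem one_add_X_mul_derivative_logOnePlus_pow (r : ℕ) :
    (1 + X) * d⁄dX ℝ (logOnePlus ^ (r + 1)) = ((r : ℝ) + 1) • logOnePlus ^ r := by
  rw [Derivation.leibniz_pow, Nat.add_sub_cancel, smul_eq_mul, mul_smul_comm, mul_left_comm,
    one_add_X_mul_derivative_logOnePlus, mul_one, ← Nat.cast_smul_eq_nsmul ℝ]
  push_cast
  rfl

theorem coeff_logOnePlus_pow_succ (n r : ℕ) :
    ((n : ℝ) + 1) * coeff (n + 1) (logOnePlus ^ (r + 1)) + n * coeff n (logOnePlus ^ (r + 1)) =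
      ((r : ℝ) + 1) * coeff n (logOnePlus ^ r) := by
  have h := congrArg (coeff n) (one_add_X_mul_derivative_logOnePlus_pow r)
  rw [add_mul, one_mul, map_add, coeff_derivative, map_smul, smul_eq_mul] at h
  rcases n with _ | n
  · simpa using h
  · rw [coeff_succ_X_mul, coeff_derivative] at h
    push_cast at h ⊢
    linarith

theorem factorial_mul_coeff_logOnePlus_pow (n r : ℕ) :
    (n.factorial : ℝ) * coeff n (logOnePlus ^ r) = (-1) ^ (n + r) * r.factorial * stirling1 n r := by
  induction n generalizing r with
  | zero =>
    rcases r with _ | r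
    · simp [stirling1]
    · simp [stirling1, coeff_pow_eq_zero_of_lt constantCoeff_logOnePlus]
  | succ n ih =>
    rcases r with _ | r
    · simp [stirling1, coeff_one]
    · have hrec := coeff_logOnePlus_pow_succ n r
      have ih' := ih (r + 1)
      simp only [Nat.factorial_succ, stirling1, Nat.cast_mul, Nat.cast_add, Nat.cast_one] at ih' ⊢
      linear_combination (n.factorial : ℝ) * hrec + ((r : ℝ) + 1) * ih r - (n : ℝ) * ih'

theorem egf_subst_logOnePlus (c : ℕ → ℝ) :
    (egf c).subst logOnePlus =
      egf fun n => ∑ m ∈ range (n + 1), (-1) ^ (n + m) * stirling1 n m * c m := by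
  ext n
  rw [coeff_subst_eq_sum_range constantCoeff_logOnePlus]
  simp only [egf, coeff_mk, sum_div]
  refine sum_congr rfl fun m _ => ?_
  have hn : (n.factorial : ℝ) ≠ 0 := by positivity
  rw [eq_div_iff hn]
  field_simp
  linear_combination c m * factorial_mul_coeff_logOnePlus_pow n m

theorem pqPolyCauchy_second_kind_genFun
    (p q : ℝ) (k : ℤ) (x : ℝ) :
    expComp (x • logOnePlus) * pqLif p q k (-logOnePlus) = egf (pqCauchy2 p q k x) := by
  rw [expComp_smul x constantCoeff_logOnePlus, ← neg_one_smul ℝ logOnePlus,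
    pqLif_smul p q k (-1) constantCoeff_logOnePlus,
    ← subst_mul (HasSubst.of_constantCoeff_zero' constantCoeff_logOnePlus), egf_mul,
    egf_subst_logOnePlus]
  congr 1
  funext n
  rw [pqCauchy2, mul_sum]
  refine sum_congr rfl fun m _ => ?_
  rw [mul_sum, mul_sum, mul_sum]
  refine sum_congr rfl fun l hl => ?_
  obtain ⟨j, rfl⟩ := Nat.exists_eq_add_of_le (mem_range_succ_iff.mp hl)
  have hsign : (-1 : ℝ) ^ j * (-1) ^ j = 1 := by rw [← mul_pow]; norm_num
  rw [Nat.add_sub_cancel_left, neg_pow x]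
  linear_combination (-1) ^ (n + l) * (stirling1 n (l + j) : ℝ) * ((l + j).choose l : ℝ) * x ^ l
    / pqInt p q (j + 1) ^ k * hsign
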